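/- Let (Δ_n) be a process on ℤ adapted to a filtration (ℱ_n) with Δ_0 = 0, such that conditionally on ℱ_n: if Δ_n ≥ 1 then Δ_{n+1} − Δ_n ∈ {−1, 0, +1} with P(Δ_{n+1} = Δ_n + 1 | ℱ_n) ≤ p and P(Δ_{n+1} = Δ_n − 1 | ℱ_n) ≥ q, where p ≤ q; and Δ_{n+1} − Δ_n ≤ 1 always. Then almost surely limsup_{n→∞} max{Δ_n, 0} / n = 0. -/

import Mathlib

open MeasureTheory ProbabilityTheory Filter

lemma det_aux (y : ℕ → ℝ) (hstep : ∀ n, y (n+1) ≤ y n + 1) :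
    ∀ m d : ℕ, y (m + d) ≤ y m + d := by
  intro m d
  induction d with
  | zero => simp
  | succ d ih =>
    have := hstep (m + d)
    push_cast
    calc y (m + d + 1) ≤ y (m + d) + 1 := this
    _ ≤ y m + (↑d + 1) := by linarith

lemma det_lemma (y : ℕ → ℝ) (hpos : ∀ n, 0 ≤ y n) (hstep : ∀ n, y (n+1) ≤ y n + 1)
    (h : ∀ ε : ℝ, 0 < ε → ∀ᶠ k in atTop, y (k^2) < ε * (k:ℝ)^2) :
    Tendsto (fun n => y n / n) atTop (nhds 0) := by
  rw [tendsto_order]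
  constructor
  · intro a ha
    filter_upwards [] with n
    exact lt_of_lt_of_le ha (div_nonneg (hpos n) (Nat.cast_nonneg n))
  · intro ε hε
    have hε' : 0 < ε / 3 := by linarith
    obtain ⟨K, hK⟩ := (h (ε/3) hε').exists_forall_of_atTop
    obtain ⟨M, hM⟩ := exists_nat_gt (2 / (ε/3))
    filter_upwards [eventually_ge_atTop ((max K M + 1) * (max K M + 1))] with n hn
    set k := Nat.sqrt n with hk
    have hkL : max K M + 1 ≤ k := Nat.le_sqrt.2 hn
    have hk1 : 1 ≤ k := le_trans (by omega) hkL
    have hkn : k ^ 2 ≤ n := Nat.sqrt_le' n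
    have hnlt : n < (k+1)^2 := Nat.lt_succ_sqrt' n
    have hnpos : (0:ℝ) < n := by
      have : 1 ≤ n := le_trans (Nat.one_le_iff_ne_zero.2 (by positivity)) hn
      exact_mod_cast lt_of_lt_of_le zero_lt_one (by exact_mod_cast this)
    rw [div_lt_iff₀ hnpos]
    have h1 : y n ≤ y (k^2) + ((n : ℝ) - (k:ℝ)^2) := by
      have := det_aux y hstep (k^2) (n - k^2)
      rw [Nat.add_sub_cancel' hkn] at this
      have hc : ((n - k^2 : ℕ) : ℝ) = (n:ℝ) - (k:ℝ)^2 := by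
        rw [Nat.cast_sub hkn]
        push_cast; ring
      linarith [hc ▸ this]
    have h2 : (n:ℝ) - (k:ℝ)^2 ≤ 2 * k := by
      have h' : (n:ℝ) + 1 ≤ ((k:ℝ)+1)^2 := by exact_mod_cast Nat.succ_le_of_lt hnlt
      nlinarith [sq_nonneg ((k:ℝ))]
    have h3 : y (k^2) < (ε/3) * (k:ℝ)^2 := hK k (le_trans (by omega) hkL)
    have h4 : (ε/3) * (k:ℝ)^2 ≤ (ε/3) * n := by
      have : ((k:ℝ))^2 ≤ n := by exact_mod_cast hkn
      nlinarith
    have h5 : 2 * (k:ℝ) ≤ (ε/3) * (k:ℝ)^2 := by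
      have hkM : (M:ℝ) ≤ k := by exact_mod_cast le_trans (by omega) hkL
      have : 2 / (ε/3) < (k:ℝ) := lt_of_lt_of_le hM hkM
      have h2k : 2 < (ε/3) * k := by
        rw [div_lt_iff₀ hε'] at this; linarith
      have hkpos : (0:ℝ) < k := by exact_mod_cast hk1
      nlinarith
    calc y n ≤ y (k^2) + ((n:ℝ) - (k:ℝ)^2) := h1
      _ < (ε/3) * (k:ℝ)^2 + 2 * k := by linarith
      _ ≤ (ε/3) * n + (ε/3) * n := by nlinarith [le_trans h5 h4]
      _ < ε * n := by nlinarith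

set_option maxHeartbeats 1000000 in
/-- if an adapted integer process starting at `0` has increments at most
`1`, and whenever `Δₙ ≥ 1` the increment is in `{−1,0,1}` with conditional
probability at most `p` of `+1` and at least `q` of `−1`, where `p ≤ q`, then a.s.
`limsup max{Δₙ,0}/n = 0`. -/
theorem dominated_positive_part_sublinear
    {Ω : Type*} {m0 : MeasurableSpace Ω} (μ : Measure Ω) [IsProbabilityMeasure μ]
    (p q : ℝ) (hp : 0 ≤ p) (hq : q ≤ 1) (hpq : p ≤ q)
    (ℱ : Filtration ℕ m0)
    (Δ : ℕ → Ω → ℤ) (hmeas : ∀ n, Measurable (Δ n))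
    (hadapted : ∀ n, @Measurable Ω ℤ (ℱ n) _ (Δ n))
    (h0 : ∀ ω, Δ 0 ω = 0)
    (hstep_le : ∀ n, ∀ᵐ ω ∂μ, Δ (n + 1) ω - Δ n ω ≤ 1)
    (hcond : ∀ n, ∀ᵐ ω ∂μ, 1 ≤ Δ n ω →
      (Δ (n + 1) ω - Δ n ω ∈ ({-1, 0, 1} : Set ℤ) ∧
       (μ[Set.indicator {ω' | Δ (n + 1) ω' = Δ n ω' + 1} (fun _ => (1 : ℝ)) | ℱ n]) ω ≤ p ∧
       q ≤ (μ[Set.indicator {ω' | Δ (n + 1) ω' = Δ n ω' - 1} (fun _ => (1 : ℝ)) | ℱ n]) ω)) :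
    ∀ᵐ ω ∂μ,
      Filter.limsup (fun n : ℕ => ((max (Δ n ω) 0 : ℤ) : ℝ) / n) atTop = 0 := by
  set Y : ℕ → Ω → ℝ := fun n ω => ((max (Δ n ω) 0 : ℤ) : ℝ) with hYdef
  have hYnn : ∀ n ω, 0 ≤ Y n ω := fun n ω => by
    simp only [hYdef]
    exact_mod_cast le_max_right (Δ n ω) 0
  have hYm : ∀ n, Measurable (Y n) := by
    intro n
    simp only [hYdef]
    exact (measurable_from_top (f := fun z : ℤ => ((max z 0 : ℤ) : ℝ))).comp (hmeas n)
  have hYa : ∀ n, Measurable[ℱ n] (Y n) := by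
    intro n
    simp only [hYdef]
    exact (measurable_from_top (f := fun z : ℤ => ((max z 0 : ℤ) : ℝ))).comp (hadapted n)
  have hYbdd : ∀ n, ∀ᵐ ω ∂μ, Y n ω ≤ n := by
    intro n
    induction n with
    | zero =>
      filter_upwards [] with ω
      simp [hYdef, h0 ω]
    | succ n ih =>
      filter_upwards [ih, hstep_le n] with ω h1 h2
      have hz : max (Δ (n+1) ω) 0 ≤ max (Δ n ω) 0 + 1 := by omega
      have hz' : Y (n+1) ω ≤ Y n ω + 1 := by
        simp only [hYdef]; exact_mod_cast hz
      push_cast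
      linarith
  have hY2int : ∀ n, Integrable (fun ω => (Y n ω)^2) μ := by
    intro n
    refine Integrable.mono' (integrable_const ((n:ℝ)^2))
      (((hYm n).pow_const 2).aestronglyMeasurable) ?_
    filter_upwards [hYbdd n] with ω h
    rw [Real.norm_eq_abs, abs_of_nonneg (sq_nonneg _)]
    exact pow_le_pow_left₀ (hYnn n ω) h 2
  -- key one-step integral estimate
  have key : ∀ n, ∫ ω, (Y (n+1) ω)^2 ∂μ ≤ ∫ ω, (Y n ω)^2 ∂μ + 1 := by
    intro n
    set A : Set Ω := {ω | 1 ≤ Δ n ω} with hAdef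
    have hA_F : MeasurableSet[ℱ n] A := by
      have h' : MeasurableSet[ℱ n] (Δ n ⁻¹' {z : ℤ | 1 ≤ z}) :=
        hadapted n (MeasurableSpace.measurableSet_top)
      exact h'
    have hA_m0 : MeasurableSet A := ℱ.le n A hA_F
    set g : Ω → ℝ := A.indicator (Y n) with hgdef
    have hg_sm : StronglyMeasurable[ℱ n] g :=
      ((hYa n).stronglyMeasurable).indicator hA_F
    have hg_m : Measurable g := (hYm n).indicator hA_m0
    have hg_nn : ∀ ω, 0 ≤ g ω := fun ω =>
      Set.indicator_nonneg (fun ω' _ => hYnn n ω') ω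
    have hg_bd : ∀ᵐ ω ∂μ, ‖g ω‖ ≤ (n:ℝ) := by
      filter_upwards [hYbdd n] with ω h
      rw [Real.norm_eq_abs, abs_of_nonneg (hg_nn ω), hgdef]
      by_cases hω : ω ∈ A
      · rw [Set.indicator_of_mem hω]; exact h
      · rw [Set.indicator_of_notMem hω]; positivity
    have hg_int : Integrable g μ :=
      Integrable.mono' (integrable_const ((n:ℝ))) hg_m.aestronglyMeasurable hg_bd
    set ip : Ω → ℝ := Set.indicator {ω' | Δ (n + 1) ω' = Δ n ω' + 1} (fun _ => (1:ℝ)) with hipdef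
    set im : Ω → ℝ := Set.indicator {ω' | Δ (n + 1) ω' = Δ n ω' - 1} (fun _ => (1:ℝ)) with himdef
    have hBp : MeasurableSet {ω' | Δ (n + 1) ω' = Δ n ω' + 1} :=
      measurableSet_eq_fun (hmeas (n+1)) ((hmeas n).add_const 1)
    have hBm : MeasurableSet {ω' | Δ (n + 1) ω' = Δ n ω' - 1} :=
      measurableSet_eq_fun (hmeas (n+1)) ((hmeas n).sub_const 1)
    have hip_int : Integrable ip μ := (integrable_const (1:ℝ)).indicator hBp
    have him_int : Integrable im μ := (integrable_const (1:ℝ)).indicator hBm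
    have hint_gip : Integrable (g * ip) μ :=
      Integrable.bdd_mul hip_int hg_m.aestronglyMeasurable hg_bd
    have hint_gim : Integrable (g * im) μ :=
      Integrable.bdd_mul him_int hg_m.aestronglyMeasurable hg_bd
    -- pointwise bound
    have hptw : ∀ᵐ ω ∂μ, (Y (n+1) ω)^2 ≤
        (Y n ω)^2 + 2 * ((g * ip) ω - (g * im) ω) + 1 := by
      filter_upwards [hstep_le n, hcond n] with ω hle hc
      simp only [Pi.mul_apply]
      by_cases h1 : 1 ≤ Δ n ω
      · obtain ⟨hs, -, -⟩ := hc h1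
        simp only [Set.mem_insert_iff, Set.mem_singleton_iff] at hs
        have hgω : g ω = ((Δ n ω : ℤ):ℝ) := by
          rw [hgdef, Set.indicator_of_mem (show ω ∈ A from h1)]
          simp only [hYdef]
          norm_cast
          omega
        have hy0 : Y n ω = ((Δ n ω : ℤ):ℝ) := by
          simp only [hYdef]; norm_cast; omega
        rcases hs with hs | hs | hs
        · have hΔ : Δ (n+1) ω = Δ n ω - 1 := by omega
          have hip0 : ip ω = 0 := by
            rw [hipdef]
            exact Set.indicator_of_notMem (by simp only [Set.mem_setOf_eq]; omega) _
          have him1 : im ω = 1 := by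
            rw [himdef]
            exact Set.indicator_of_mem (by simp only [Set.mem_setOf_eq]; omega) _
          have hy1 : Y (n+1) ω = ((Δ n ω : ℤ):ℝ) - 1 := by
            simp only [hYdef]
            have : max (Δ (n+1) ω) 0 = Δ n ω - 1 := by omega
            rw [this]; push_cast; ring
          rw [hy1, hy0, hgω, hip0, him1]; ring_nf
          nlinarith [sq_nonneg (((Δ n ω):ℝ))]
        · have hip0 : ip ω = 0 := by
            rw [hipdef]
            exact Set.indicator_of_notMem (by simp only [Set.mem_setOf_eq]; omega) _
          have him0 : im ω = 0 := by
            rw [himdef]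
            exact Set.indicator_of_notMem (by simp only [Set.mem_setOf_eq]; omega) _
          have hy1 : Y (n+1) ω = Y n ω := by
            simp only [hYdef]
            have : max (Δ (n+1) ω) 0 = max (Δ n ω) 0 := by omega
            rw [this]
          rw [hy1, hip0, him0]; nlinarith [sq_nonneg (Y n ω)]
        · have hΔ : Δ (n+1) ω = Δ n ω + 1 := by omega
          have hip1 : ip ω = 1 := by
            rw [hipdef]
            exact Set.indicator_of_mem (by simp only [Set.mem_setOf_eq]; omega) _
          have him0 : im ω = 0 := by
            rw [himdef]
            exact Set.indicator_of_notMem (by simp only [Set.mem_setOf_eq]; omega) _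
          have hy1 : Y (n+1) ω = ((Δ n ω : ℤ):ℝ) + 1 := by
            simp only [hYdef]
            have : max (Δ (n+1) ω) 0 = Δ n ω + 1 := by omega
            rw [this]; push_cast; ring
          rw [hy1, hy0, hgω, hip1, him0]; nlinarith [sq_nonneg (((Δ n ω):ℝ))]
      · have hg0 : g ω = 0 := by
          rw [hgdef]; exact Set.indicator_of_notMem (show ω ∉ A from h1) _
        have hub : Y (n+1) ω ≤ 1 := by
          simp only [hYdef]
          have : max (Δ (n+1) ω) 0 ≤ 1 := by omega
          exact_mod_cast this
        rw [hg0]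
        nlinarith [hYnn (n+1) ω, sq_nonneg (Y n ω)]
    -- conditional expectation estimates
    have hpull_p : ∫ ω, (g * ip) ω ∂μ ≤ p * ∫ ω, g ω ∂μ := by
      have e2 : μ[g * ip|ℱ n] =ᵐ[μ] g * μ[ip|ℱ n] :=
        condExp_mul_of_stronglyMeasurable_left hg_sm hint_gip hip_int
      have hcE : Integrable (fun ω => g ω * (μ[ip|ℱ n]) ω) μ :=
        Integrable.bdd_mul integrable_condExp hg_m.aestronglyMeasurable hg_bd
      calc ∫ ω, (g * ip) ω ∂μ = ∫ ω, (μ[g * ip|ℱ n]) ω ∂μ :=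
            (integral_condExp (ℱ.le n)).symm
        _ = ∫ ω, g ω * (μ[ip|ℱ n]) ω ∂μ := integral_congr_ae e2
        _ ≤ ∫ ω, p * g ω ∂μ := by
            refine integral_mono_ae hcE (hg_int.const_mul p) ?_
            filter_upwards [hcond n] with ω hc
            by_cases h1 : 1 ≤ Δ n ω
            · have hE := (hc h1).2.1
              rw [← hipdef] at hE
              have := mul_le_mul_of_nonneg_left hE (hg_nn ω)
              linarith [this, mul_comm (g ω) p]
            · have hg0 : g ω = 0 := by
                rw [hgdef]; exact Set.indicator_of_notMem (show ω ∉ A from h1) _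
              rw [hg0]; simp
        _ = p * ∫ ω, g ω ∂μ := integral_const_mul p g
    have hpull_q : q * ∫ ω, g ω ∂μ ≤ ∫ ω, (g * im) ω ∂μ := by
      have e2 : μ[g * im|ℱ n] =ᵐ[μ] g * μ[im|ℱ n] :=
        condExp_mul_of_stronglyMeasurable_left hg_sm hint_gim him_int
      have hcE : Integrable (fun ω => g ω * (μ[im|ℱ n]) ω) μ :=
        Integrable.bdd_mul integrable_condExp hg_m.aestronglyMeasurable hg_bd
      calc q * ∫ ω, g ω ∂μ = ∫ ω, q * g ω ∂μ := (integral_const_mul q g).symm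
        _ ≤ ∫ ω, g ω * (μ[im|ℱ n]) ω ∂μ := by
            refine integral_mono_ae (hg_int.const_mul q) hcE ?_
            filter_upwards [hcond n] with ω hc
            by_cases h1 : 1 ≤ Δ n ω
            · have hE := (hc h1).2.2
              rw [← himdef] at hE
              have := mul_le_mul_of_nonneg_left hE (hg_nn ω)
              linarith [this, mul_comm (g ω) q]
            · have hg0 : g ω = 0 := by
                rw [hgdef]; exact Set.indicator_of_notMem (show ω ∉ A from h1) _
              rw [hg0]; simp
        _ = ∫ ω, (μ[g * im|ℱ n]) ω ∂μ := (integral_congr_ae e2).symm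
        _ = ∫ ω, (g * im) ω ∂μ := integral_condExp (ℱ.le n)
    have hgnn' : 0 ≤ ∫ ω, g ω ∂μ := integral_nonneg hg_nn
    have step1 : ∫ ω, (Y (n+1) ω)^2 ∂μ ≤
        ∫ ω, ((Y n ω)^2 + 2 * ((g * ip) ω - (g * im) ω) + 1) ∂μ := by
      refine integral_mono_ae (hY2int (n+1)) ?_ hptw
      exact ((hY2int n).add ((hint_gip.sub hint_gim).const_mul 2)).add (integrable_const 1)
    have hIb : Integrable (fun ω => 2 * ((g * ip) ω - (g * im) ω)) μ :=
      (hint_gip.sub hint_gim).const_mul 2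
    have hIa : Integrable (fun ω => (Y n ω)^2 + 2 * ((g * ip) ω - (g * im) ω)) μ :=
      (hY2int n).add hIb
    have step2 : ∫ ω, ((Y n ω)^2 + 2 * ((g * ip) ω - (g * im) ω) + 1) ∂μ =
        ∫ ω, (Y n ω)^2 ∂μ + 2 * (∫ ω, (g * ip) ω ∂μ - ∫ ω, (g * im) ω ∂μ) + 1 := by
      have e1 : ∫ ω, ((Y n ω)^2 + 2 * ((g * ip) ω - (g * im) ω) + 1) ∂μ
          = ∫ ω, ((Y n ω)^2 + 2 * ((g * ip) ω - (g * im) ω)) ∂μ + ∫ _ω, (1:ℝ) ∂μ :=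
        integral_add hIa (integrable_const 1)
      have e2 : ∫ ω, ((Y n ω)^2 + 2 * ((g * ip) ω - (g * im) ω)) ∂μ
          = ∫ ω, (Y n ω)^2 ∂μ + ∫ ω, 2 * ((g * ip) ω - (g * im) ω) ∂μ :=
        integral_add (hY2int n) hIb
      have e3 : ∫ ω, 2 * ((g * ip) ω - (g * im) ω) ∂μ
          = 2 * ∫ ω, ((g * ip) ω - (g * im) ω) ∂μ := integral_const_mul 2 _
      have e4 : ∫ ω, ((g * ip) ω - (g * im) ω) ∂μ
          = ∫ ω, (g * ip) ω ∂μ - ∫ ω, (g * im) ω ∂μ := integral_sub hint_gip hint_gim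
      have e5 : ∫ _ω : Ω, (1:ℝ) ∂μ = 1 := by simp
      rw [e1, e2, e3, e4, e5]
    have hdrift : 2 * (∫ ω, (g * ip) ω ∂μ - ∫ ω, (g * im) ω ∂μ) ≤ 0 := by
      nlinarith [hpull_p, hpull_q, hgnn', hpq]
    calc ∫ ω, (Y (n+1) ω)^2 ∂μ ≤ _ := step1
      _ = _ := step2
      _ ≤ ∫ ω, (Y n ω)^2 ∂μ + 1 := by linarith
  -- second moment bound
  have hE : ∀ n, ∫ ω, (Y n ω)^2 ∂μ ≤ (n:ℝ) := by
    intro n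
    induction n with
    | zero =>
      have : ∀ ω, (Y 0 ω)^2 = 0 := fun ω => by
        simp only [hYdef]; simp [h0 ω]
      rw [integral_congr_ae (ae_of_all _ this)]
      simp
    | succ n ih =>
      have := key n
      push_cast
      linarith
  -- Borel-Cantelli
  have hBC : ∀ᵐ ω ∂μ, ∀ m : ℕ, ∀ᶠ k in atTop,
      Y (k^2) ω < (1/((m:ℝ)+1)) * (k:ℝ)^2 := by
    rw [ae_all_iff]
    intro m
    set ε : ℝ := 1/((m:ℝ)+1) with hεdef
    have hεpos : 0 < ε := by rw [hεdef]; positivity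
    set S : ℕ → Set Ω := fun k => {ω | ε * ((k+1:ℕ):ℝ)^2 ≤ Y ((k+1)^2) ω} with hSdef
    have hSb : ∀ k, μ (S k) ≤ ENNReal.ofReal ((1/ε^2) * (1/((k+1:ℕ):ℝ)^2)) := by
      intro k
      set K := k + 1 with hKdef
      have hKr : (0:ℝ) < (K:ℝ) := by rw [hKdef]; positivity
      have markov := mul_meas_ge_le_integral_of_nonneg (μ := μ)
        (f := fun ω => (Y (K^2) ω)^2) (ae_of_all _ fun ω => sq_nonneg _)
        (hY2int (K^2)) ((ε * (K:ℝ)^2)^2)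
      have hsub : S k ⊆ {x | (ε * (K:ℝ)^2)^2 ≤ (Y (K^2) x)^2} := by
        intro x hx
        have hx' : ε * ((K:ℕ):ℝ)^2 ≤ Y (K^2) x := hx
        have h0' : (0:ℝ) ≤ ε * (K:ℝ)^2 := by positivity
        exact pow_le_pow_left₀ h0' hx' 2
      have h1 : μ (S k) ≤ μ {x | (ε * (K:ℝ)^2)^2 ≤ (Y (K^2) x)^2} := measure_mono hsub
      have hfin : μ (S k) ≠ ⊤ := measure_ne_top μ _
      have hto : (μ (S k)).toReal ≤ (μ {x | (ε * (K:ℝ)^2)^2 ≤ (Y (K^2) x)^2}).toReal :=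
        ENNReal.toReal_mono (measure_ne_top μ _) h1
      have h2 : (ε * (K:ℝ)^2)^2 * (μ {x | (ε * (K:ℝ)^2)^2 ≤ (Y (K^2) x)^2}).toReal
          ≤ (K:ℝ)^2 := by
        refine le_trans markov (le_trans (hE (K^2)) ?_)
        push_cast
        ring_nf
        exact le_refl _
      have hval : (μ (S k)).toReal ≤ (1/ε^2) * (1/(K:ℝ)^2) := by
        have hεK : (0:ℝ) < ε^2 * (K:ℝ)^4 := by positivity
        rw [show (1/ε^2) * (1/(K:ℝ)^2) = (K:ℝ)^2 / (ε^2 * (K:ℝ)^4) by field_simp]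
        rw [le_div_iff₀ hεK]
        nlinarith [hto, h2, ENNReal.toReal_nonneg (a := μ {x | (ε * (K:ℝ)^2)^2 ≤ (Y (K^2) x)^2})]
      calc μ (S k) = ENNReal.ofReal ((μ (S k)).toReal) := (ENNReal.ofReal_toReal hfin).symm
        _ ≤ _ := ENNReal.ofReal_le_ofReal hval
    have hsummable : Summable (fun k : ℕ => (1/ε^2) * (1/((k+1:ℕ):ℝ)^2)) := by
      apply Summable.mul_left
      have hs : Summable (fun k : ℕ => 1/((k:ℕ):ℝ)^2) :=
        Real.summable_one_div_nat_pow.2 (by norm_num)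
      exact (summable_nat_add_iff 1).2 hs
    have htsum : ∑' k, μ (S k) ≠ ⊤ := by
      refine ne_top_of_le_ne_top ?_ (ENNReal.tsum_le_tsum hSb)
      rw [← ENNReal.ofReal_tsum_of_nonneg (fun k => by positivity) hsummable]
      exact ENNReal.ofReal_ne_top
    filter_upwards [ae_eventually_notMem htsum] with ω hω
    obtain ⟨N, hN⟩ := eventually_atTop.1 hω
    rw [eventually_atTop]
    refine ⟨N + 1, fun k hk => ?_⟩
    have h := hN (k - 1) (by omega)
    have hk' : k - 1 + 1 = k := by omega
    rw [hSdef] at h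
    simp only [Set.mem_setOf_eq, hk'] at h
    push_neg at h
    exact h
  -- assemble
  have hae_steps : ∀ᵐ ω ∂μ, ∀ n, Δ (n + 1) ω - Δ n ω ≤ 1 := ae_all_iff.2 hstep_le
  filter_upwards [hae_steps, hBC] with ω hsω hbω
  have hstepω : ∀ n, Y (n+1) ω ≤ Y n ω + 1 := by
    intro n
    have := hsω n
    have hz : max (Δ (n+1) ω) 0 ≤ max (Δ n ω) 0 + 1 := by omega
    simp only [hYdef]
    exact_mod_cast hz
  have hεω : ∀ ε : ℝ, 0 < ε → ∀ᶠ k in atTop, Y (k^2) ω < ε * (k:ℝ)^2 := by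
    intro ε hε
    obtain ⟨m, hm⟩ := exists_nat_one_div_lt hε
    filter_upwards [hbω m, eventually_ge_atTop 1] with k h1 h2
    have hk2 : (0:ℝ) < (k:ℝ)^2 := by
      have : (0:ℝ) < (k:ℝ) := by exact_mod_cast h2
      positivity
    calc Y (k^2) ω < (1/((m:ℝ)+1)) * (k:ℝ)^2 := h1
      _ < ε * (k:ℝ)^2 := by nlinarith [hm]
  have tend := det_lemma (fun n => Y n ω) (fun n => hYnn n ω) hstepω hεω
  simpa only [hYdef] using tend.limsup_eq
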